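/- Suppose (as in Step 5 of Tate's algorithm for Kodaira type IV) that v(a₁) ≥ 1, v(a₂) ≥ 1, v(a₃) ≥ 1, v(a₄) ≥ 2, v(a₆) ≥ 2 and v(b₆) = 2. Let P = (x, y) be a point on E with v(x) > 0 and v(y) > 0, and assume v(φ₃(P)) ≤ v(ψ₃²(P)) (i.e. m_P = 3). Then v(ψ₂²(P)) = 2, v(ψ₄(P)) = 5·v(ψ₂(P)), and v(φ₃(P)) = 3·v(ψ₂²(P)) = 6. -/

import Mathlib

open Polynomial

/-! Write `x = πX` and `b₂ = πB₂`, `b₄ = π²B₄`, `b₆ = π²B₆`, `b₈ = π³B₈` with integral `X`, `Bᵢ`;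
then `v(B₆) = 0` since `v(b₆) = 2`. Expanding in powers of `π`,
`ψ₂²(P) = π²(B₆ + π·…)`, `preΨ₄(P) = π⁴(-B₆² + π·…)` and `φ₃(P) = xψ₃² - preΨ₄·ψ₂² = π⁶(B₆³ + π·…)`
with integral `…`, so these have valuations `2`, `4` and `6`; finally `v(ψ₂(P)) = 1` and
`ψ₄ = preΨ₄·ψ₂`. -/

theorem WithTop.int_one_le_of_pos {a : WithTop ℤ} (h : 0 < a) : 1 ≤ a := by
  induction a using WithTop.recTopCoe with
  | top => exact le_top
  | coe a => exact_mod_cast (show (0 : ℤ) < a by exact_mod_cast h)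

theorem WithTop.int_nsmul_injective {n : ℕ} (hn : n ≠ 0) :
    Function.Injective fun a : WithTop ℤ => n • a := by
  have top_nsmul : n • (⊤ : WithTop ℤ) = ⊤ := by
    obtain ⟨m, rfl⟩ := Nat.exists_eq_succ_of_ne_zero hn
    rw [succ_nsmul, WithTop.add_top]
  intro a b h
  induction a using WithTop.recTopCoe <;> induction b using WithTop.recTopCoe
  · rfl
  all_goals simp only [← WithTop.coe_nsmul, top_nsmul, WithTop.coe_ne_top, WithTop.top_ne_coe,
    WithTop.coe_inj] at h
  exact congrArg _ (nsmul_right_injective hn h)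

@[simp, norm_cast]
theorem Subring.coe_ofNat {R : Type*} [Ring R] (O : Subring R) (n : ℕ) [n.AtLeastTwo] :
    ((ofNat(n) : O) : R) = ofNat(n) :=
  map_ofNat O.subtype n

namespace AddValuation

section Integer

variable {R Γ₀ : Type*} [Ring R] [LinearOrderedAddCommMonoidWithTop Γ₀]

def integer (v : AddValuation R Γ₀) : Subring R where
  carrier := {r | 0 ≤ v r}
  zero_mem' := by simp
  one_mem' := by simp
  add_mem' {a b} ha hb := (le_min ha hb).trans (v.map_add a b)
  mul_mem' {a b} ha hb := by simpa using add_nonneg ha hb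
  neg_mem' {a} ha := by simpa using ha

@[simp]
theorem mem_integer_iff (v : AddValuation R Γ₀) (r : R) : r ∈ v.integer ↔ 0 ≤ v r := Iff.rfl

end Integer

section Uniformizer

variable {K : Type*} [Field K] (v : AddValuation K (WithTop ℤ)) {ϖ : v.integer}

theorem map_pow_mul (hϖ : v ϖ = 1) (n : ℕ) (z : K) : v (ϖ ^ n * z) = n + v z := by
  rw [v.map_mul, v.map_pow, hϖ, nsmul_one]

theorem map_eq_zero_of_map_pow_mul_eq (hϖ : v ϖ = 1) {n : ℕ} {z : K} (h : v (ϖ ^ n * z) = n) :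
    v z = 0 := by
  rw [v.map_pow_mul hϖ] at h
  exact (WithTop.add_left_inj (WithTop.natCast_ne_top n)).1 (h.trans (add_zero _).symm)

theorem exists_eq_pow_mul_of_le (hϖ : v ϖ = 1) {n : ℕ} {z : K} (hz : (n : WithTop ℤ) ≤ v z) :
    ∃ Z : v.integer, z = ϖ ^ n * Z := by
  have hϖn : (ϖ : K) ^ n ≠ 0 := by
    refine pow_ne_zero n ?_
    rw [← v.ne_top_iff, hϖ]
    exact WithTop.one_ne_top
  refine ⟨⟨z / ϖ ^ n, ?_⟩, (mul_div_cancel₀ z hϖn).symm⟩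
  rwa [mem_integer_iff, ← WithTop.add_le_add_iff_left (WithTop.natCast_ne_top n), add_zero,
    ← v.map_pow_mul hϖ, mul_div_cancel₀ z hϖn]

theorem map_pow_mul_add_mul (hϖ : v ϖ = 1) (n : ℕ) {u : K} (hu : v u = 0)
    (r : v.integer) : v (ϖ ^ n * (u + ϖ * r)) = n := by
  have hdom : v u < v (ϖ * r) := by
    rw [hu, v.map_mul, hϖ]
    exact zero_lt_one.trans_le (le_add_of_nonneg_right r.2)
  rw [v.map_pow_mul hϖ, v.map_add_eq_of_lt_left hdom, hu, add_zero]

end Uniformizer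

end AddValuation

def addValuationOfAxioms {K : Type*} [Field K] (v : K → WithTop ℤ)
    (hv_top : ∀ z : K, v z = ⊤ ↔ z = 0)
    (hv_mul : ∀ z w : K, v (z * w) = v z + v w)
    (hv_add : ∀ z w : K, min (v z) (v w) ≤ v (z + w)) : AddValuation K (WithTop ℤ) :=
  AddValuation.of v ((hv_top 0).2 rfl)
    ((WithTop.add_left_inj (x := v 1) (by simp [hv_top])).1 (by simpa using (hv_mul 1 1).symm))
    hv_add hv_mul

namespace WeierstrassCurve

section Evaluation

variable {R : Type*} [CommRing R] (W : WeierstrassCurve R) (x y : R)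

theorem eval_Ψ₂Sq : W.Ψ₂Sq.eval x = 4 * x ^ 3 + W.b₂ * x ^ 2 + 2 * W.b₄ * x + W.b₆ := by
  simp [Ψ₂Sq]

theorem eval_Ψ₃ :
    W.Ψ₃.eval x = 3 * x ^ 4 + W.b₂ * x ^ 3 + 3 * W.b₄ * x ^ 2 + 3 * W.b₆ * x + W.b₈ := by
  simp [Ψ₃]

theorem eval_preΨ₄ : W.preΨ₄.eval x = 2 * x ^ 6 + W.b₂ * x ^ 5 + 5 * W.b₄ * x ^ 4
    + 10 * W.b₆ * x ^ 3 + 10 * W.b₈ * x ^ 2 + (W.b₂ * W.b₈ - W.b₄ * W.b₆) * x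
    + (W.b₄ * W.b₈ - W.b₆ ^ 2) := by
  simp [preΨ₄]

theorem evalEval_ψ_four : (W.ψ 4).evalEval x y = W.preΨ₄.eval x * (W.ψ 2).evalEval x y := by
  rw [ψ_four, evalEval_mul, evalEval_C, ψ_two]

theorem evalEval_ψ_two_sq_of_equation (h : W.toAffine.Equation x y) :
    (W.ψ 2).evalEval x y ^ 2 = W.Ψ₂Sq.eval x := by
  rw [Affine.Equation] at h
  simpa [ψ_two, h, evalEval_C] using congrArg (evalEval x y) W.ψ₂_sq

theorem evalEval_φ_three_of_equation (h : W.toAffine.Equation x y) :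
    (W.φ 3).evalEval x y = x * W.Ψ₃.eval x ^ 2 - W.preΨ₄.eval x * W.Ψ₂Sq.eval x := by
  rw [← W.evalEval_ψ_two_sq_of_equation x y h, φ_three, ψ_two]
  simp [evalEval_C]

end Evaluation

section Expansion

variable {K : Type*} [CommRing K] {O : Subring K} (W : WeierstrassCurve K) {ϖ : O}

theorem exists_b_eq_of_a_eq {A₁ A₂ A₃ A₄ A₆ : O} (h₁ : W.a₁ = ϖ * A₁) (h₂ : W.a₂ = ϖ * A₂)
    (h₃ : W.a₃ = ϖ * A₃) (h₄ : W.a₄ = ϖ ^ 2 * A₄) (h₆ : W.a₆ = ϖ ^ 2 * A₆) :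
    ∃ B₂ B₄ B₆ B₈ : O, W.b₂ = ϖ * B₂ ∧ W.b₄ = ϖ ^ 2 * B₄ ∧ W.b₆ = ϖ ^ 2 * B₆ ∧
      W.b₈ = ϖ ^ 3 * B₈ := by
  refine ⟨ϖ * A₁ ^ 2 + 4 * A₂, 2 * A₄ + A₁ * A₃, A₃ ^ 2 + 4 * A₆,
    ϖ * A₁ ^ 2 * A₆ + 4 * A₂ * A₆ - ϖ * A₁ * A₃ * A₄ + A₂ * A₃ ^ 2 - ϖ * A₄ ^ 2, ?_, ?_, ?_, ?_⟩
  · rw [b₂, h₁, h₂]; push_cast; ring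
  · rw [b₄, h₁, h₃, h₄]; push_cast; ring
  · rw [b₆, h₃, h₆]; push_cast; ring
  · rw [b₈, h₁, h₂, h₃, h₄, h₆]; push_cast; ring

variable {x : K} {X B₂ B₄ B₆ B₈ : O} (hx : x = ϖ * X) (hb₂ : W.b₂ = ϖ * B₂)
  (hb₄ : W.b₄ = ϖ ^ 2 * B₄) (hb₆ : W.b₆ = ϖ ^ 2 * B₆) (hb₈ : W.b₈ = ϖ ^ 3 * B₈)
include hx hb₂ hb₄ hb₆

theorem exists_eval_Ψ₂Sq_eq : ∃ r : O, W.Ψ₂Sq.eval x = ϖ ^ 2 * (B₆ + ϖ * r) :=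
  ⟨4 * X ^ 3 + B₂ * X ^ 2 + 2 * B₄ * X, by rw [eval_Ψ₂Sq, hx, hb₂, hb₄, hb₆]; push_cast; ring⟩

include hb₈

theorem exists_eval_Ψ₃_eq : ∃ r : O, W.Ψ₃.eval x = ϖ ^ 3 * r :=
  ⟨ϖ * (3 * X ^ 4 + B₂ * X ^ 3 + 3 * B₄ * X ^ 2) + 3 * B₆ * X + B₈,
    by rw [eval_Ψ₃, hx, hb₂, hb₄, hb₆, hb₈]; push_cast; ring⟩

theorem exists_eval_preΨ₄_eq : ∃ r : O, W.preΨ₄.eval x = ϖ ^ 4 * (-B₆ ^ 2 + ϖ * r) :=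
  ⟨ϖ * (2 * X ^ 6 + B₂ * X ^ 5 + 5 * B₄ * X ^ 4) + 10 * B₆ * X ^ 3 + 10 * B₈ * X ^ 2
      + (B₂ * B₈ - B₄ * B₆) * X + B₄ * B₈,
    by rw [eval_preΨ₄, hx, hb₂, hb₄, hb₆, hb₈]; push_cast; ring⟩

theorem exists_eval_φ_three_eq :
    ∃ r : O, x * W.Ψ₃.eval x ^ 2 - W.preΨ₄.eval x * W.Ψ₂Sq.eval x = ϖ ^ 6 * (B₆ ^ 3 + ϖ * r) := by
  obtain ⟨R, hR⟩ := W.exists_eval_Ψ₂Sq_eq hx hb₂ hb₄ hb₆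
  obtain ⟨S, hS⟩ := W.exists_eval_Ψ₃_eq hx hb₂ hb₄ hb₆ hb₈
  obtain ⟨T, hT⟩ := W.exists_eval_preΨ₄_eq hx hb₂ hb₄ hb₆ hb₈
  exact ⟨X * S ^ 2 + B₆ ^ 2 * R - B₆ * T - ϖ * R * T, by rw [hR, hS, hT, hx]; push_cast; ring⟩

end Expansion

section TypeIV

variable {K : Type*} [Field K] (v : AddValuation K (WithTop ℤ)) {ϖ : v.integer} (hϖ : v ϖ = 1)
  (W : WeierstrassCurve K)
include hϖ

theorem exists_b_eq_of_val_a_le (ha₁ : 1 ≤ v W.a₁) (ha₂ : 1 ≤ v W.a₂) (ha₃ : 1 ≤ v W.a₃)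
    (ha₄ : 2 ≤ v W.a₄) (ha₆ : 2 ≤ v W.a₆) :
    ∃ B₂ B₄ B₆ B₈ : v.integer, W.b₂ = ϖ * B₂ ∧ W.b₄ = ϖ ^ 2 * B₄ ∧ W.b₆ = ϖ ^ 2 * B₆ ∧
      W.b₈ = ϖ ^ 3 * B₈ := by
  obtain ⟨A₁, h₁⟩ := v.exists_eq_pow_mul_of_le hϖ (n := 1) (by simpa using ha₁)
  obtain ⟨A₂, h₂⟩ := v.exists_eq_pow_mul_of_le hϖ (n := 1) (by simpa using ha₂)
  obtain ⟨A₃, h₃⟩ := v.exists_eq_pow_mul_of_le hϖ (n := 1) (by simpa using ha₃)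
  obtain ⟨A₄, h₄⟩ := v.exists_eq_pow_mul_of_le hϖ (n := 2) (by simpa using ha₄)
  obtain ⟨A₆, h₆⟩ := v.exists_eq_pow_mul_of_le hϖ (n := 2) (by simpa using ha₆)
  rw [pow_one] at h₁ h₂ h₃
  exact W.exists_b_eq_of_a_eq h₁ h₂ h₃ h₄ h₆

variable {x : K} {X B₂ B₄ B₆ B₈ : v.integer} (hx : x = ϖ * X) (hb₂ : W.b₂ = ϖ * B₂)
  (hb₄ : W.b₄ = ϖ ^ 2 * B₄) (hb₆ : W.b₆ = ϖ ^ 2 * B₆) (hb₈ : W.b₈ = ϖ ^ 3 * B₈) (hB₆ : v B₆ = 0)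
include hx hb₂ hb₄ hb₆ hB₆

theorem val_eval_Ψ₂Sq : v (W.Ψ₂Sq.eval x) = 2 := by
  obtain ⟨r, hr⟩ := W.exists_eval_Ψ₂Sq_eq hx hb₂ hb₄ hb₆
  rw [hr, v.map_pow_mul_add_mul hϖ 2 hB₆]
  rfl

include hb₈

theorem val_eval_preΨ₄ : v (W.preΨ₄.eval x) = 4 := by
  obtain ⟨r, hr⟩ := W.exists_eval_preΨ₄_eq hx hb₂ hb₄ hb₆ hb₈
  have hu : v (-B₆ ^ 2 : K) = 0 := by simp [hB₆]
  rw [hr, v.map_pow_mul_add_mul hϖ 4 hu]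
  rfl

theorem val_eval_φ_three :
    v (x * W.Ψ₃.eval x ^ 2 - W.preΨ₄.eval x * W.Ψ₂Sq.eval x) = 6 := by
  obtain ⟨r, hr⟩ := W.exists_eval_φ_three_eq hx hb₂ hb₄ hb₆ hb₈
  have hu : v (B₆ ^ 3 : K) = 0 := by simp [hB₆]
  rw [hr, v.map_pow_mul_add_mul hϖ 6 hu]
  rfl

end TypeIV

end WeierstrassCurve

theorem greatest_common_valuation_stmt_12_general {K : Type*} [Field K]
    (v : K → WithTop ℤ)
    (hv_top : ∀ z : K, v z = ⊤ ↔ z = 0)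
    (hv_mul : ∀ z w : K, v (z * w) = v z + v w)
    (hv_add : ∀ z w : K, min (v z) (v w) ≤ v (z + w))
    (π : K) (hπ : v π = 1)
    (W : WeierstrassCurve K)
    (ha₁ : 1 ≤ v W.a₁) (ha₂ : 1 ≤ v W.a₂) (ha₃ : 1 ≤ v W.a₃)
    (ha₄ : ((2 : ℤ) : WithTop ℤ) ≤ v W.a₄) (ha₆ : ((2 : ℤ) : WithTop ℤ) ≤ v W.a₆)
    (hb₆ : v W.b₆ = ((2 : ℤ) : WithTop ℤ))
    (x y : K) (hP : W.toAffine.Equation x y) (hx : 0 < v x) :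
    v (W.Ψ₂Sq.eval x) = ((2 : ℤ) : WithTop ℤ) ∧
    v ((W.ψ 4).evalEval x y) = 5 • v ((W.ψ 2).evalEval x y) ∧
    v ((W.φ 3).evalEval x y) = 3 • v (W.Ψ₂Sq.eval x) ∧
    v ((W.φ 3).evalEval x y) = ((6 : ℤ) : WithTop ℤ) := by
  let w := addValuationOfAxioms v hv_top hv_mul hv_add
  let ϖ : w.integer := ⟨π, by simp [w, addValuationOfAxioms, hπ]⟩
  have hϖ : w ϖ = 1 := hπ
  have hx₁ : ((1 : ℕ) : WithTop ℤ) ≤ w x := by exact_mod_cast WithTop.int_one_le_of_pos hx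
  obtain ⟨X, hX⟩ := w.exists_eq_pow_mul_of_le hϖ hx₁
  rw [pow_one] at hX
  obtain ⟨B₂, B₄, B₆, B₈, hB₂, hB₄, hB₆, hB₈⟩ :=
    W.exists_b_eq_of_val_a_le w hϖ ha₁ ha₂ ha₃ ha₄ ha₆
  have hvB₆ : w B₆ = 0 := w.map_eq_zero_of_map_pow_mul_eq hϖ (n := 2) (hB₆ ▸ hb₆)
  have hΨ₂Sq := W.val_eval_Ψ₂Sq w hϖ hX hB₂ hB₄ hB₆ hvB₆
  have hpreΨ₄ := W.val_eval_preΨ₄ w hϖ hX hB₂ hB₄ hB₆ hB₈ hvB₆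
  have hφ : w ((W.φ 3).evalEval x y) = 6 := by
    rw [W.evalEval_φ_three_of_equation x y hP]
    exact W.val_eval_φ_three w hϖ hX hB₂ hB₄ hB₆ hB₈ hvB₆
  have hψ₂ : w ((W.ψ 2).evalEval x y) = 1 := by
    refine WithTop.int_nsmul_injective two_ne_zero ?_
    beta_reduce
    rw [← w.map_pow, W.evalEval_ψ_two_sq_of_equation x y hP, hΨ₂Sq]
    rfl
  change w _ = _ ∧ w _ = 5 • w _ ∧ w _ = 3 • w _ ∧ w _ = _
  refine ⟨hΨ₂Sq, ?_, ?_, hφ⟩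
  · rw [W.evalEval_ψ_four, w.map_mul, hpreΨ₄, hψ₂]
    rfl
  · rw [hφ, hΨ₂Sq]
    rfl

/-- (Step 5 of Tate's algorithm, Kodaira type `IV`.)  Let `K` be a field with a normalised
discrete valuation `v` with uniformiser `π`, and let `E/K` be a Weierstrass curve with
`v(a₁) ≥ 1`, `v(a₂) ≥ 1`, `v(a₃) ≥ 1`, `v(a₄) ≥ 2`, `v(a₆) ≥ 2` and `v(b₆) = 2`.  Let
`P = (x, y)` be a point on `E` with `v(x) > 0` and `v(y) > 0`, and assume
`v(φ₃(P)) ≤ v(ψ₃²(P))` (i.e. `m_P = 3`).  Then `v(ψ₂²(P)) = 2`,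
`v(ψ₄(P)) = 5·v(ψ₂(P))`, and `v(φ₃(P)) = 3·v(ψ₂²(P)) = 6`. -/
theorem greatest_common_valuation_stmt_12 {K : Type*} [Field K]
    (v : K → WithTop ℤ)
    (hv_top : ∀ z : K, v z = ⊤ ↔ z = 0)
    (hv_mul : ∀ z w : K, v (z * w) = v z + v w)
    (hv_add : ∀ z w : K, min (v z) (v w) ≤ v (z + w))
    (π : K) (hπ : v π = 1)
    (W : WeierstrassCurve K)
    (ha₁ : 1 ≤ v W.a₁) (ha₂ : 1 ≤ v W.a₂) (ha₃ : 1 ≤ v W.a₃)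
    (ha₄ : ((2 : ℤ) : WithTop ℤ) ≤ v W.a₄) (ha₆ : ((2 : ℤ) : WithTop ℤ) ≤ v W.a₆)
    (hb₆ : v W.b₆ = ((2 : ℤ) : WithTop ℤ))
    (x y : K) (hP : W.toAffine.Equation x y) (hx : 0 < v x) (hy : 0 < v y)
    (hle : v ((W.φ 3).evalEval x y) ≤ v ((W.ψ 3).evalEval x y ^ 2)) :
    v (W.Ψ₂Sq.eval x) = ((2 : ℤ) : WithTop ℤ) ∧
    v ((W.ψ 4).evalEval x y) = 5 • v ((W.ψ 2).evalEval x y) ∧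
    v ((W.φ 3).evalEval x y) = 3 • v (W.Ψ₂Sq.eval x) ∧
    v ((W.φ 3).evalEval x y) = ((6 : ℤ) : WithTop ℤ) :=
  greatest_common_valuation_stmt_12_general v hv_top hv_mul hv_add π hπ W ha₁ ha₂ ha₃ ha₄ ha₆ hb₆ x
    y hP hx
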